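/- Let e₀, e₁ be real numbers with e₀ > −1 and e₁ > −1, and let R ∈ ℂ[z] be any polynomial. Then ∫₀¹ T₁(R)(x)·x^{e₀}·(1−x)^{e₁} dx = 0, where T₁(R) = z(1−z)·R′ + (e₀ + 1 − (e₀+e₁+2)·z)·R. -/

import Mathlib

open Polynomial Set

/-!
Writing `w a b x = x ^ a * (1 - x) ^ b`, on `(0, 1)` one has
`T₁(R) · w e₀ e₁ = (R · w (e₀ + 1) (e₁ + 1))′`. For `e₀, e₁ > -1` this primitive is continuous
on `[0, 1]` and vanishes at both ends, so the integral is zero by the fundamental theorem of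
calculus.
-/
/-- The operator `T₁(R) = z(1−z)·R′ + (e₀+1 − (e₀+e₁+2)z)·R` (the case `J = 1` of `T`),
acting on complex polynomials, with real parameters `e₀, e₁`. -/
noncomputable def T1 (e₀ e₁ : ℝ) (R : ℂ[X]) : ℂ[X] :=
  X * (1 - X) * derivative R +
    (C ((e₀ : ℂ) + 1) - C ((e₀ : ℂ) + e₁ + 2) * X) * R

noncomputable def jacobiWeight (a b x : ℝ) : ℝ := x ^ a * (1 - x) ^ b

theorem intervalIntegrable_jacobiWeight {a b : ℝ} (ha : -1 < a) (hb : -1 < b) :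
    IntervalIntegrable (fun x => (jacobiWeight a b x : ℂ)) MeasureTheory.volume 0 1 := by
  have hbeta := Complex.betaIntegral_convergent (u := (a : ℂ) + 1) (v := (b : ℂ) + 1)
    (by simpa using by linarith) (by simpa using by linarith)
  simp only [add_sub_cancel_right] at hbeta
  refine hbeta.congr fun x hx => ?_
  rw [uIoc_of_le zero_le_one] at hx
  simp only [jacobiWeight, Complex.ofReal_mul]
  rw [Complex.ofReal_cpow hx.1.le, Complex.ofReal_cpow (by linarith [hx.2]),
    Complex.ofReal_sub, Complex.ofReal_one]

theorem continuous_jacobiWeight {a b : ℝ} (ha : 0 ≤ a) (hb : 0 ≤ b) :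
    Continuous (jacobiWeight a b) :=
  (Real.continuous_rpow_const ha).mul
    ((Real.continuous_rpow_const hb).comp (continuous_const.sub continuous_id))

theorem jacobiWeight_zero {a : ℝ} (ha : a ≠ 0) (b : ℝ) : jacobiWeight a b 0 = 0 := by
  simp [jacobiWeight, Real.zero_rpow ha]

theorem jacobiWeight_one (a : ℝ) {b : ℝ} (hb : b ≠ 0) : jacobiWeight a b 1 = 0 := by
  simp [jacobiWeight, Real.zero_rpow hb]

theorem jacobiWeight_add_one (a b : ℝ) {x : ℝ} (hx : x ∈ Ioo 0 1) :
    jacobiWeight (a + 1) (b + 1) x = x * (1 - x) * jacobiWeight a b x := by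
  rw [jacobiWeight, jacobiWeight, Real.rpow_add_one hx.1.ne',
    Real.rpow_add_one (sub_pos.2 hx.2).ne']
  ring

theorem hasDerivAt_jacobiWeight_add_one (a b : ℝ) {x : ℝ} (hx : x ∈ Ioo 0 1) :
    HasDerivAt (jacobiWeight (a + 1) (b + 1))
      ((a + 1 - (a + b + 2) * x) * jacobiWeight a b x) x := by
  have hx₀ : x ≠ 0 := hx.1.ne'
  have hx₁ : 1 - x ≠ 0 := (sub_pos.2 hx.2).ne'
  have hleft : HasDerivAt (fun y : ℝ => y ^ (a + 1)) ((a + 1) * x ^ a) x := by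
    simpa using (hasDerivAt_id' x).rpow_const (p := a + 1) (Or.inl hx₀)
  have hright : HasDerivAt (fun y : ℝ => (1 - y) ^ (b + 1)) (-((b + 1) * (1 - x) ^ b)) x := by
    convert ((hasDerivAt_id' x).const_sub 1).rpow_const (p := b + 1) (Or.inl hx₁) using 1
    rw [add_sub_cancel_right]
    ring
  refine (hleft.mul hright).congr_deriv ?_
  rw [jacobiWeight, Real.rpow_add_one hx₀, Real.rpow_add_one hx₁]
  ring

theorem hasDerivAt_eval_mul_jacobiWeight_add_one (e₀ e₁ : ℝ) (R : ℂ[X]) {x : ℝ}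
    (hx : x ∈ Ioo 0 1) :
    HasDerivAt (fun y : ℝ => R.eval (y : ℂ) * (jacobiWeight (e₀ + 1) (e₁ + 1) y : ℂ))
      ((T1 e₀ e₁ R).eval (x : ℂ) * (jacobiWeight e₀ e₁ x : ℂ)) x := by
  have hR : HasDerivAt (fun y : ℝ => R.eval (y : ℂ)) ((derivative R).eval (x : ℂ)) x :=
    (R.hasDerivAt (x : ℂ)).comp_ofReal
  refine (hR.mul (hasDerivAt_jacobiWeight_add_one e₀ e₁ hx).ofReal_comp).congr_deriv ?_
  rw [jacobiWeight_add_one e₀ e₁ hx]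
  simp only [T1, eval_add, eval_mul, eval_sub, eval_X, eval_one, eval_C]
  push_cast
  ring

/-- For `e₀, e₁ > −1` and any complex polynomial `R`,
`∫₀¹ T₁(R)(x)·x^{e₀}·(1−x)^{e₁} dx = 0`. -/
theorem stmt_10 (e₀ e₁ : ℝ) (h₀ : -1 < e₀) (h₁ : -1 < e₁) (R : ℂ[X]) :
    (∫ x in (0:ℝ)..1, (T1 e₀ e₁ R).eval (x : ℂ) * ((x ^ e₀ * (1 - x) ^ e₁ : ℝ) : ℂ)) = 0 := by
  have hcont : ContinuousOn
      (fun y : ℝ => R.eval (y : ℂ) * (jacobiWeight (e₀ + 1) (e₁ + 1) y : ℂ)) (Icc 0 1) :=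
    ((R.continuous.comp Complex.continuous_ofReal).mul (Complex.continuous_ofReal.comp
      (continuous_jacobiWeight (by linarith) (by linarith)))).continuousOn
  have hint : IntervalIntegrable (fun x : ℝ => (T1 e₀ e₁ R).eval (x : ℂ) *
      (jacobiWeight e₀ e₁ x : ℂ)) MeasureTheory.volume 0 1 :=
    (intervalIntegrable_jacobiWeight h₀ h₁).continuousOn_mul
      ((T1 e₀ e₁ R).continuous.comp Complex.continuous_ofReal).continuousOn
  change (∫ x in (0:ℝ)..1, (T1 e₀ e₁ R).eval (x : ℂ) * (jacobiWeight e₀ e₁ x : ℂ)) = 0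
  rw [intervalIntegral.integral_eq_sub_of_hasDerivAt_of_le zero_le_one hcont
    (fun x hx => hasDerivAt_eval_mul_jacobiWeight_add_one e₀ e₁ R hx) hint]
  have hw₀ := jacobiWeight_zero (by linarith : (0 : ℝ) < e₀ + 1).ne' (e₁ + 1)
  have hw₁ := jacobiWeight_one (e₀ + 1) (by linarith : (0 : ℝ) < e₁ + 1).ne'
  simp [hw₀, hw₁]
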